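/- Define P_c : A_m → A_m by P_c(w) = w + q_{Λ(Z(w)−1)(c)}, where Λ is the cyclically equivariant layer-1 Latin table (Λ(S+k)(a+k) = Λ(S)(a)+k). Then for every c ∈ Z/5, P_c ∘ ρ_c = T_{q_{4+c}} ∘ ρ_c ∘ P_0, where ρ_c is the coordinate rotation (ρ_c w)_j = w_{j−c} and T_v(w) = w + v. In particular P_c is a bijection whenever P_0 is. -/

import Mathlib

/-- `q_i = e_i − e_4` (so `q_4 = 0`). -/
def qVec (m : ℕ) (i : Fin 5) : Fin 5 → ZMod m :=
  fun j => (if j = i then 1 else 0) - (if j = (4 : Fin 5) then 1 else 0)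

/-- Zero-set `Z(w) = {i : w_i = 0}`. -/
def zeroSet {m : ℕ} (w : Fin 5 → ZMod m) : Finset (Fin 5) :=
  Finset.univ.filter (fun i => w i = 0)

/-- The coordinate rotation `(ρ_c w)_j = w_{j−c}` (indices mod 5). -/
def rot (m : ℕ) (c : Fin 5) (w : Fin 5 → ZMod m) : Fin 5 → ZMod m :=
  fun j => w (j - c)

/-- The non-constant layer map of color `c`: `P_c(w) = w + q_{Λ(Z(w)−1)(c)}`. -/
def layerP (m : ℕ) (Λ : Finset (Fin 5) → Fin 5 → Fin 5) (c : Fin 5)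
    (w : Fin 5 → ZMod m) : Fin 5 → ZMod m :=
  w + qVec m (Λ ((zeroSet w).image (· - (1 : Fin 5))) c)

/-!
The cyclic rule for `Λ` says exactly that the zero-set rule commutes with rotating
coordinates and colors together, so `P_c` is `P_0` conjugated by the rotation `ρ_c`, up to
the correction `q_{4+c}` that appears because `ρ_c` moves the base index `4` of `q_i = e_i − e_4`.
Rotations and translations by sum-zero vectors are bijections of `A_m`, hence so is `P_c`
when `P_0` is.
-/

theorem Set.bijOn_add_right_setOf_sum_eq_zero {ι M : Type*} [Fintype ι] [AddCommGroup M]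
    {v : ι → M} (hv : ∑ i, v i = 0) :
    Set.BijOn (· + v) {w : ι → M | ∑ i, w i = 0} {w | ∑ i, w i = 0} := by
  refine Set.InvOn.bijOn (f' := (· - v)) ⟨fun w _ ↦ add_sub_cancel_right w v,
    fun w _ ↦ sub_add_cancel w v⟩ ?_ ?_ <;>
  intro w hw <;>
  simp_all [Finset.sum_add_distrib, Finset.sum_sub_distrib]

section Rotation

variable (m : ℕ)

theorem sum_qVec (i : Fin 5) : ∑ j, qVec m i j = 0 := by
  simp [qVec, Finset.sum_sub_distrib]

theorem rot_add (c : Fin 5) (v w : Fin 5 → ZMod m) :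
    rot m c (v + w) = rot m c v + rot m c w :=
  rfl

theorem rot_qVec_add_qVec (c i : Fin 5) :
    rot m c (qVec m i) + qVec m (4 + c) = qVec m (i + c) := by
  funext j
  simp only [rot, qVec, Pi.add_apply, sub_eq_iff_eq_add, add_comm (4 : Fin 5) c]
  ring

theorem rot_neg_rot (c : Fin 5) (w : Fin 5 → ZMod m) : rot m (-c) (rot m c w) = w := by
  funext j; simp [rot]

theorem rot_rot_neg (c : Fin 5) (w : Fin 5 → ZMod m) : rot m c (rot m (-c) w) = w := by
  simpa using rot_neg_rot m (-c) w

theorem sum_rot (c : Fin 5) (w : Fin 5 → ZMod m) : ∑ j, rot m c w j = ∑ j, w j :=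
  Equiv.sum_comp (Equiv.subRight c) w

theorem bijOn_rot (c : Fin 5) :
    Set.BijOn (rot m c) {w | ∑ i, w i = 0} {w | ∑ i, w i = 0} :=
  Set.InvOn.bijOn (f' := rot m (-c)) ⟨fun w _ ↦ rot_neg_rot m c w, fun w _ ↦ rot_rot_neg m c w⟩
    (fun w hw ↦ (sum_rot m c w).trans hw) (fun w hw ↦ (sum_rot m (-c) w).trans hw)

theorem zeroSet_rot (c : Fin 5) (w : Fin 5 → ZMod m) :
    zeroSet (rot m c w) = (zeroSet w).image (· + c) := by
  ext j
  simp only [zeroSet, Finset.mem_filter_univ, Finset.mem_image]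
  exact ⟨fun h ↦ ⟨j - c, h, sub_add_cancel j c⟩, by rintro ⟨a, ha, rfl⟩; simpa [rot] using ha⟩

end Rotation

section Layer

variable (m : ℕ) (Λ : Finset (Fin 5) → Fin 5 → Fin 5)

theorem layerP_rot
    (hequiv : ∀ (S : Finset (Fin 5)) (k a : Fin 5), Λ (S.image (· + k)) (a + k) = Λ S a + k)
    (c : Fin 5) (w : Fin 5 → ZMod m) :
    layerP m Λ c (rot m c w) = rot m c (layerP m Λ 0 w) + qVec m (4 + c) := by
  set S := (zeroSet w).image (· - (1 : Fin 5))
  have hS : (zeroSet (rot m c w)).image (· - (1 : Fin 5)) = S.image (· + c) := by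
    rw [zeroSet_rot, Finset.image_image, Finset.image_image]
    congr 1; funext a; exact add_sub_right_comm a c 1
  have hΛ : Λ (S.image (· + c)) c = Λ S 0 + c := by simpa using hequiv S c 0
  rw [layerP, layerP, hS, hΛ, rot_add, add_assoc, rot_qVec_add_qVec]

theorem layerP_eq_comp
    (hequiv : ∀ (S : Finset (Fin 5)) (k a : Fin 5), Λ (S.image (· + k)) (a + k) = Λ S a + k)
    (c : Fin 5) :
    layerP m Λ c = (· + qVec m (4 + c)) ∘ rot m c ∘ layerP m Λ 0 ∘ rot m (-c) := by
  funext v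
  simpa [rot_rot_neg] using layerP_rot m Λ hequiv c (rot m (-c) v)

end Layer

theorem color_equivariance_general (m : ℕ)
    (Λ : Finset (Fin 5) → Fin 5 → Fin 5)
    (hequiv : ∀ (S : Finset (Fin 5)) (k a : Fin 5),
      Λ (S.image (· + k)) (a + k) = Λ S a + k) :
    ∀ c : Fin 5,
      (∀ w : Fin 5 → ZMod m, (∑ i, w i) = 0 →
        layerP m Λ c (rot m c w) = rot m c (layerP m Λ 0 w) + qVec m (4 + c)) ∧
      (Set.BijOn (layerP m Λ 0) {w : Fin 5 → ZMod m | ∑ i, w i = 0}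
          {w : Fin 5 → ZMod m | ∑ i, w i = 0} →
        Set.BijOn (layerP m Λ c) {w : Fin 5 → ZMod m | ∑ i, w i = 0}
          {w : Fin 5 → ZMod m | ∑ i, w i = 0}) := by
  intro c
  refine ⟨fun w _ ↦ layerP_rot m Λ hequiv c w, fun hP₀ ↦ ?_⟩
  rw [layerP_eq_comp m Λ hequiv c]
  exact (Set.bijOn_add_right_setOf_sum_eq_zero (sum_qVec m (4 + c))).comp
    ((bijOn_rot m c).comp (hP₀.comp (bijOn_rot m (-c))))

/-- **Affine color equivariance.** For the cyclically equivariant layer-1 Latin table `Λ`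
(with the representative rows of the paper), `P_c ∘ ρ_c = T_{q_{4+c}} ∘ ρ_c ∘ P_0` on the
root flat; in particular `P_c` is a bijection of `A_m` whenever `P_0` is. -/
theorem color_equivariance (m : ℕ)
    (Λ : Finset (Fin 5) → Fin 5 → Fin 5)
    (hequiv : ∀ (S : Finset (Fin 5)) (k a : Fin 5),
      Λ (S.image (· + k)) (a + k) = Λ S a + k)
    (h0 : Λ ∅ = ![0, 1, 2, 3, 4])
    (h1 : Λ {0} = ![0, 1, 3, 2, 4])
    (h2 : Λ {0, 1} = ![4, 1, 3, 2, 0])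
    (h3 : Λ {0, 2} = ![4, 1, 3, 0, 2])
    (h4 : Λ {0, 1, 2} = ![1, 0, 3, 4, 2])
    (h5 : Λ {0, 1, 3} = ![4, 3, 0, 2, 1])
    (h6 : Λ Finset.univ = ![0, 1, 2, 3, 4]) :
    ∀ c : Fin 5,
      (∀ w : Fin 5 → ZMod m, (∑ i, w i) = 0 →
        layerP m Λ c (rot m c w) = rot m c (layerP m Λ 0 w) + qVec m (4 + c)) ∧
      (Set.BijOn (layerP m Λ 0) {w : Fin 5 → ZMod m | ∑ i, w i = 0}
          {w : Fin 5 → ZMod m | ∑ i, w i = 0} →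
        Set.BijOn (layerP m Λ c) {w : Fin 5 → ZMod m | ∑ i, w i = 0}
          {w : Fin 5 → ZMod m | ∑ i, w i = 0}) :=
  color_equivariance_general m Λ hequiv
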